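/- arXiv:2411.03423 — 3 statements merged into one kernel-verified Lean document; each statement's English description precedes it below -/
import Mathlib

section
/- Counterexample to concavity of higher Rényi entropies: there exists a probability-vector family λ(T) arising from loss on a Fock state (e.g. |6⟩, with λ_m(T) = C(6,m)T^m(1−T)^{6−m}) and an order α > 2 (e.g. α = 12) such that the Rényi entropy H_α(T) = (1/(1−α))·log Σ_m λ_m(T)^α is NOT concave on (0,1): there exist T₁, T₂ ∈ (0,1) and t ∈ (0,1) with H_α(t·T₁+(1−t)·T₂) < t·H_α(T₁) + (1−t)·H_α(T₂). -/
open Set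

/-- Counterexample to concavity of higher-order Rényi entropies: for the Fock
state `|6⟩` under loss, with eigenvalues `λ_m(T) = C(6,m) T^m (1-T)^(6-m)`, the
order-12 Rényi entropy `H₁₂(T) = (1/(1-12)) log ∑_m λ_m(T)¹²` is not concave on
`(0,1)`. -/
theorem renyi_12_fock6_not_concave :
    ∃ T₁ ∈ Ioo (0:ℝ) 1, ∃ T₂ ∈ Ioo (0:ℝ) 1, ∃ t ∈ Ioo (0:ℝ) 1,
      (fun T : ℝ => (1 / (1 - 12 : ℝ)) *
          Real.log (∑ m ∈ Finset.range 7,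
            ((Nat.choose 6 m : ℝ) * T ^ m * (1 - T) ^ (6 - m)) ^ (12:ℕ)))
            (t * T₁ + (1 - t) * T₂)
        < t * ((fun T : ℝ => (1 / (1 - 12 : ℝ)) *
            Real.log (∑ m ∈ Finset.range 7,
              ((Nat.choose 6 m : ℝ) * T ^ m * (1 - T) ^ (6 - m)) ^ (12:ℕ))) T₁)
          + (1 - t) * ((fun T : ℝ => (1 / (1 - 12 : ℝ)) *
            Real.log (∑ m ∈ Finset.range 7,
              ((Nat.choose 6 m : ℝ) * T ^ m * (1 - T) ^ (6 - m)) ^ (12:ℕ))) T₂) := by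
  refine ⟨3/20, by norm_num, 11/40, by norm_num, 1/2, by norm_num, ?_⟩
  have harg : (1/2 : ℝ) * (3/20) + (1 - 1/2) * (11/40) = 17/80 := by norm_num
  simp only []
  rw [harg]
  have e1 : (∑ m ∈ Finset.range 7,
      ((Nat.choose 6 m : ℝ) * (3/20 : ℝ) ^ m * (1 - 3/20) ^ (6 - m)) ^ (12:ℕ)) = (29194688608290457426289977830200147556254835424808947209876947405584113128883417190444081 / 1180591620717411303424000000000000000000000000000000000000000000000000000000000000000000000000 : ℝ) := by
    norm_num [Finset.sum_range_succ, Nat.choose]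
  have e2 : (∑ m ∈ Finset.range 7,
      ((Nat.choose 6 m : ℝ) * (11/40 : ℝ) ^ m * (1 - 11/40) ^ (6 - m)) ^ (12:ℕ)) = (14478667010325977844136591769260527456619300627359550591712685717348595148313777441734996085350679859520800161 / 5575186299632655785383929568162090376495104000000000000000000000000000000000000000000000000000000000000000000000000 : ℝ) := by
    norm_num [Finset.sum_range_succ, Nat.choose]
  have em : (∑ m ∈ Finset.range 7,
      ((Nat.choose 6 m : ℝ) * (17/80 : ℝ) ^ m * (1 - 17/80) ^ (6 - m)) ^ (12:ℕ)) = (292914512035841893142767980943987922612603362966431945085103315539244223992733064331843548141429076056410568453387850054057050130401 / 26328072917139296674479506920917608079723773850137277813577744384000000000000000000000000000000000000000000000000000000000000000000000000 : ℝ) := by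
    norm_num [Finset.sum_range_succ, Nat.choose]
  rw [e1, e2, em]
  have key : Real.log ((29194688608290457426289977830200147556254835424808947209876947405584113128883417190444081 / 1180591620717411303424000000000000000000000000000000000000000000000000000000000000000000000000 : ℝ) * (14478667010325977844136591769260527456619300627359550591712685717348595148313777441734996085350679859520800161 / 5575186299632655785383929568162090376495104000000000000000000000000000000000000000000000000000000000000000000000000 : ℝ)) < Real.log ((292914512035841893142767980943987922612603362966431945085103315539244223992733064331843548141429076056410568453387850054057050130401 / 26328072917139296674479506920917608079723773850137277813577744384000000000000000000000000000000000000000000000000000000000000000000000000 : ℝ) ^ (2:ℕ)) :=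
    Real.log_lt_log (by positivity) (by norm_num)
  rw [Real.log_mul (by norm_num) (by norm_num), Real.log_pow] at key
  push_cast at key
  linarith
end

section
/- For positive semidefinite matrices A and B with A invertible (or on the support of A), the identity sqrt(A)·log(A)·sqrt(A) = A·log(A) holds, and more generally for any complex matrix X, sqrt(X·Xᴴ)·log(X·Xᴴ)·sqrt(X·Xᴴ) = X·log(Xᴴ·X)·Xᴴ, where log is the functional calculus logarithm restricted to the support. -/
open Matrix ComplexOrder

/-- Matrix logarithm of a Hermitian matrix via the spectral decomposition
(with the convention `log 0 = 0`, i.e. the logarithm restricted to the support). -/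
noncomputable def hermLog {n : ℕ} (A : Matrix (Fin n) (Fin n) ℂ) :
    Matrix (Fin n) (Fin n) ℂ :=
  if h : A.IsHermitian then
    (h.eigenvectorUnitary : Matrix (Fin n) (Fin n) ℂ) *
      diagonal (fun i => (Real.log (h.eigenvalues i) : ℂ)) *
        star (h.eigenvectorUnitary : Matrix (Fin n) (Fin n) ℂ)
  else 0

namespace Matrix.PosSemidef

/-- The positive semidefinite square root (Mathlib's former `Matrix.PosSemidef.sqrt`). -/
noncomputable def sqrt {m 𝕜 : Type*} [Fintype m] [DecidableEq m] [RCLike 𝕜]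
    {A : Matrix m m 𝕜} (hA : A.PosSemidef) : Matrix m m 𝕜 :=
  hA.1.eigenvectorUnitary.1 * diagonal ((↑) ∘ Real.sqrt ∘ hA.1.eigenvalues) *
    (star hA.1.eigenvectorUnitary : Matrix m m 𝕜)

end Matrix.PosSemidef

/-! Both `hermLog` and `PosSemidef.sqrt` are instances of the continuous functional calculus, so
`√A` commutes with `log A` and `√A √A = A`. For the second identity, `Xᴴ` intertwines `XXᴴ` with
`XᴴX`. Matrix spectra are finite, so `log` agrees on both spectra with a single Lagrange
interpolating polynomial, and polynomials preserve intertwining; hence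
`Xᴴ log(XXᴴ) = log(XᴴX) Xᴴ`, and `XXᴴ log(XXᴴ) = X log(XᴴX) Xᴴ`. -/

open Polynomial in
theorem SemiconjBy.aeval {R A : Type*} [CommSemiring R] [Semiring A] [Algebra R A] {y a b : A}
    (h : SemiconjBy y a b) (q : R[X]) : SemiconjBy y (aeval a q) (aeval b q) := by
  induction q using Polynomial.induction_on' with
  | add q r hq hr => simpa only [map_add] using hq.add_right hr
  | monomial n c =>
    simpa only [aeval_monomial] using
      SemiconjBy.mul_right (Algebra.commutes c y).symm (h.pow_right n)

theorem SemiconjBy.cfc_of_finite_spectrum {R A : Type*} {p : A → Prop} [Field R] [StarRing R]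
    [MetricSpace R] [IsTopologicalRing R] [ContinuousStar R] [TopologicalSpace A] [Ring A]
    [StarRing A] [Algebra R A] [ContinuousFunctionalCalculus R A p] {y a b : A}
    (h : SemiconjBy y a b) (f : R → R) (ha : (spectrum R a).Finite)
    (hb : (spectrum R b).Finite) (hpa : p a) (hpb : p b) :
    SemiconjBy y (cfc f a) (cfc f b) := by
  classical
  set s := ha.toFinset ∪ hb.toFinset
  set q := Lagrange.interpolate s id f
  have cfc_eq_aeval (c : A) (hcs : spectrum R c ⊆ s) (hpc : p c) :
      cfc f c = Polynomial.aeval c q := by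
    rw [← cfc_polynomial q c hpc]
    exact cfc_congr fun x hx =>
      (Lagrange.eval_interpolate_at_node f (Set.injOn_id _) (hcs hx)).symm
  rw [cfc_eq_aeval a (by simp [s]) hpa, cfc_eq_aeval b (by simp [s]) hpb]
  exact h.aeval q

theorem cfc_sqrt_mul_mul_cfc_sqrt {A : Type*} {p : A → Prop} [TopologicalSpace A] [Ring A]
    [StarRing A] [Algebra ℝ A] [ContinuousFunctionalCalculus ℝ A p] {a : A} (f : ℝ → ℝ)
    (ha : ∀ x ∈ spectrum ℝ a, 0 ≤ x) (hpa : p a := by cfc_tac) :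
    cfc Real.sqrt a * cfc f a * cfc Real.sqrt a = a * cfc f a := by
  calc cfc Real.sqrt a * cfc f a * cfc Real.sqrt a
      = cfc (fun x => √x * √x) a * cfc f a := by
        rw [mul_assoc, (cfc_commute_cfc f Real.sqrt a).eq, ← mul_assoc,
          cfc_mul _ _ _ Real.continuous_sqrt.continuousOn Real.continuous_sqrt.continuousOn]
    _ = a * cfc f a := by
        rw [cfc_congr fun x hx => Real.mul_self_sqrt (ha x hx), cfc_id' ℝ a]

theorem hermLog_eq_cfc {n : ℕ} (A : Matrix (Fin n) (Fin n) ℂ) : hermLog A = cfc Real.log A := by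
  by_cases hA : A.IsHermitian
  · rw [hermLog, dif_pos hA, hA.cfc_eq, IsHermitian.cfc]
    rfl
  · rw [hermLog, dif_neg hA]
    exact (cfc_apply_of_not_predicate A hA).symm

namespace Matrix.PosSemidef

variable {m 𝕜 : Type*} [Fintype m] [DecidableEq m] [RCLike 𝕜] {A : Matrix m m 𝕜}

theorem sqrt_eq_cfc (hA : A.PosSemidef) : hA.sqrt = cfc Real.sqrt A := by
  rw [hA.1.cfc_eq, IsHermitian.cfc]
  rfl

theorem nonneg_of_mem_spectrum (hA : A.PosSemidef) : ∀ x ∈ spectrum ℝ A, 0 ≤ x := by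
  rintro x hx
  obtain ⟨i, rfl⟩ := hA.1.spectrum_real_eq_range_eigenvalues ▸ hx
  exact hA.eigenvalues_nonneg i

theorem sqrt_mul_hermLog_mul_sqrt {n : ℕ} {A : Matrix (Fin n) (Fin n) ℂ} (hA : A.PosSemidef) :
    hA.sqrt * hermLog A * hA.sqrt = A * hermLog A := by
  rw [hA.sqrt_eq_cfc, hermLog_eq_cfc]
  exact cfc_sqrt_mul_mul_cfc_sqrt _ hA.nonneg_of_mem_spectrum hA.1

end Matrix.PosSemidef

theorem conjTranspose_mul_hermLog_eq_hermLog_mul_conjTranspose {n : ℕ}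
    (X : Matrix (Fin n) (Fin n) ℂ) : Xᴴ * hermLog (X * Xᴴ) = hermLog (Xᴴ * X) * Xᴴ := by
  rw [hermLog_eq_cfc, hermLog_eq_cfc]
  exact SemiconjBy.cfc_of_finite_spectrum (Matrix.mul_assoc Xᴴ X Xᴴ).symm _
    (X * Xᴴ).finite_real_spectrum (Xᴴ * X).finite_real_spectrum
    (isHermitian_mul_conjTranspose_self X) (isHermitian_conjTranspose_mul_self X)

/-- For a positive semidefinite invertible `A`, `√A (log A) √A = A log A`; and for any
complex square matrix `X`, `√(XXᴴ) log(XXᴴ) √(XXᴴ) = X log(XᴴX) Xᴴ`, where `log` is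
the functional-calculus logarithm restricted to the support. -/
theorem sqrt_log_sqrt_identity {n : ℕ} :
    (∀ (A : Matrix (Fin n) (Fin n) ℂ) (hA : A.PosSemidef), IsUnit A.det →
        hA.sqrt * hermLog A * hA.sqrt = A * hermLog A) ∧
      (∀ X : Matrix (Fin n) (Fin n) ℂ,
        (posSemidef_self_mul_conjTranspose X).sqrt * hermLog (X * Xᴴ) *
            (posSemidef_self_mul_conjTranspose X).sqrt
          = X * hermLog (Xᴴ * X) * Xᴴ) := by
  refine ⟨fun A hA _ => hA.sqrt_mul_hermLog_mul_sqrt, fun X => ?_⟩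
  rw [(posSemidef_self_mul_conjTranspose X).sqrt_mul_hermLog_mul_sqrt, Matrix.mul_assoc,
    conjTranspose_mul_hermLog_eq_hermLog_mul_conjTranspose, Matrix.mul_assoc]
end

section
/- Binomial entropy concavity: for each fixed natural number n, the Shannon entropy of the binomial distribution, S_n(T) = −Σ_{m=0}^{n} C(n,m)T^m(1−T)^{n−m}·log( C(n,m)T^m(1−T)^{n−m} ), is symmetric about T = 1/2 (S_n(T) = S_n(1−T)) and concave in T on (0,1), hence maximized at T = 1/2. -/
/-!
Expanding `log (C(n,m) T^m (1-T)^(n-m))` and using that the binomial mean is `nT` gives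
`S_n(T) = n h(T) - B(T)`, where `h` is the binary entropy and `B = ∑ₘ log C(n,m) b_{n,m}` is a
combination of Bernstein basis polynomials. Differentiating twice, `B'' = n(n-1) ∑ₖ Δ²cₖ b_{n-2,k}`
with `cₖ = log C(n,k)`, and `-Δ²cₖ = log ((k+2)/(k+1)) + log ((n-k)/(n-k-1))` is at most
`1/(k+1) + 1/(n-1-k)`. Since `(n-1) T b_{n-2,k}/(k+1) = b_{n-1,k+1}`, these weights average to at
most `1/((n-1)T) + 1/((n-1)(1-T))`, so `B'' ≥ -n/(T(1-T)) = n h''` and `S_n'' ≤ 0`.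
Symmetry follows from `C(n,m) = C(n,n-m)`, and a symmetric concave function peaks at `1/2`.
-/

open Set Polynomial Real

theorem bernsteinPolynomial.eval_eq {R : Type*} [CommRing R] (n k : ℕ) (x : R) :
    (bernsteinPolynomial R n k).eval x = n.choose k * x ^ k * (1 - x) ^ (n - k) := by
  simp [bernsteinPolynomial]

theorem bernsteinPolynomial.eval_nonneg (n k : ℕ) {x : ℝ} (hx₀ : 0 ≤ x) (hx₁ : x ≤ 1) :
    0 ≤ (bernsteinPolynomial ℝ n k).eval x := by
  rw [bernsteinPolynomial.eval_eq]
  have : 0 ≤ 1 - x := by linarith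
  positivity

theorem bernsteinPolynomial.succ_mul_succ_succ {R : Type*} [CommRing R] (n k : ℕ) :
    ((k : R[X]) + 1) * bernsteinPolynomial R (n + 1) (k + 1) =
      ((n : R[X]) + 1) * X * bernsteinPolynomial R n k := by
  have h := congrArg (Nat.cast (R := R[X])) (Nat.add_one_mul_choose_eq n k)
  push_cast at h
  simp only [bernsteinPolynomial, Nat.add_sub_add_right, pow_succ]
  linear_combination (X ^ k * (1 - X) ^ (n - k) * X) * h.symm

noncomputable def bernsteinSum {R : Type*} [CommRing R] (n : ℕ) (f : ℕ → R) : R[X] :=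
  ∑ k ∈ Finset.range (n + 1), f k • bernsteinPolynomial R n k

namespace bernsteinSum

section CommRing

variable {R : Type*} [CommRing R]

theorem add (n : ℕ) (f g : ℕ → R) :
    bernsteinSum n (fun k => f k + g k) = bernsteinSum n f + bernsteinSum n g := by
  simp [bernsteinSum, add_smul, Finset.sum_add_distrib]

theorem neg (n : ℕ) (f : ℕ → R) : bernsteinSum n (fun k => -f k) = -bernsteinSum n f := by
  simp [bernsteinSum, neg_smul]

theorem congr {n : ℕ} {f g : ℕ → R} (h : ∀ k ≤ n, f k = g k) :
    bernsteinSum n f = bernsteinSum n g :=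
  Finset.sum_congr rfl fun k hk => by rw [h k (Finset.mem_range_succ_iff.mp hk)]

theorem derivative_succ (n : ℕ) (f : ℕ → R) :
    derivative (bernsteinSum (n + 1) f) =
      ((n : R) + 1) • bernsteinSum n (fun k => f (k + 1) - f k) := by
  have hshift : ∑ k ∈ Finset.range (n + 1), f (k + 1) • bernsteinPolynomial R n (k + 1) +
      f 0 • bernsteinPolynomial R n 0 =
      ∑ k ∈ Finset.range (n + 1), f k • bernsteinPolynomial R n k := by
    rw [Finset.sum_range_succ, bernsteinPolynomial.eq_zero_of_lt R n.lt_succ_self, smul_zero,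
      add_zero, Finset.sum_range_succ' (fun k => f k • bernsteinPolynomial R n k)]
  have hcast : ((n + 1 : ℕ) : R[X]) = C ((n : R) + 1) := by simp
  simp only [bernsteinSum, derivative_sum, derivative_smul, sub_smul, Finset.sum_sub_distrib,
    ← hshift, Finset.sum_range_succ' (fun k => f k • derivative _),
    bernsteinPolynomial.derivative_succ, bernsteinPolynomial.derivative_zero, Nat.add_sub_cancel,
    hcast, neg_mul, C_mul', smul_sub, smul_add, smul_neg, Finset.smul_sum, smul_comm (f _)]
  abel

theorem derivative_derivative (n : ℕ) (f : ℕ → R) :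
    derivative (derivative (bernsteinSum (n + 2) f)) =
      (((n : R) + 2) * ((n : R) + 1)) •
        bernsteinSum n (fun k => f (k + 2) - 2 * f (k + 1) + f k) := by
  rw [derivative_succ, derivative_smul, derivative_succ, smul_smul]
  push_cast
  congr 2
  · ring
  · funext k; ring

theorem eval_eq (n : ℕ) (f : ℕ → R) (x : R) :
    (bernsteinSum n f).eval x =
      ∑ k ∈ Finset.range (n + 1), f k * (bernsteinPolynomial R n k).eval x := by
  simp [bernsteinSum, eval_finsetSum]

theorem eval_one_sub (n : ℕ) (f : ℕ → R) (x : R) :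
    (bernsteinSum n f).eval (1 - x) = (bernsteinSum n fun k => f (n - k)).eval x := by
  have hflip : ∀ k ∈ Finset.range (n + 1),
      (bernsteinPolynomial R n k).eval (1 - x) = (bernsteinPolynomial R n (n - k)).eval x := by
    intro k hk
    rw [← bernsteinPolynomial.flip R n k (Finset.mem_range_succ_iff.mp hk), eval_comp]
    simp
  rw [eval_eq, eval_eq, Finset.sum_congr rfl fun k hk => by rw [hflip k hk],
    ← Finset.sum_range_reflect]
  refine Finset.sum_congr rfl fun k hk => ?_
  rw [Nat.add_sub_cancel, Nat.sub_sub_self (Finset.mem_range_succ_iff.mp hk)]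

theorem eval_natCast (n : ℕ) (x : R) : (bernsteinSum n fun k => (k : R)).eval x = n * x := by
  have h := congrArg (eval x) (bernsteinPolynomial.sum_smul R n)
  simp only [eval_finsetSum, nsmul_eq_mul] at h
  simpa [bernsteinSum, eval_finsetSum] using h

theorem eval_natCast_sub (n : ℕ) (x : R) :
    (bernsteinSum n fun k => ((n - k : ℕ) : R)).eval x = n * (1 - x) := by
  rw [← eval_one_sub, eval_natCast]

end CommRing

theorem eval_mono {n : ℕ} {f g : ℕ → ℝ} (hfg : ∀ k ≤ n, f k ≤ g k) {x : ℝ} (hx₀ : 0 ≤ x)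
    (hx₁ : x ≤ 1) : (bernsteinSum n f).eval x ≤ (bernsteinSum n g).eval x := by
  rw [eval_eq, eval_eq]
  exact Finset.sum_le_sum fun k hk => mul_le_mul_of_nonneg_right
    (hfg k (Finset.mem_range_succ_iff.mp hk)) (bernsteinPolynomial.eval_nonneg n k hx₀ hx₁)

theorem mul_eval_inv_succ_le (n : ℕ) {x : ℝ} (hx₀ : 0 < x) (hx₁ : x ≤ 1) :
    ((n : ℝ) + 1) * (bernsteinSum n fun k => ((k : ℝ) + 1)⁻¹).eval x ≤ x⁻¹ := by
  have hshift : ∀ k : ℕ,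
      x * (((n : ℝ) + 1) * (((k : ℝ) + 1)⁻¹ * (bernsteinPolynomial ℝ n k).eval x)) =
        (bernsteinPolynomial ℝ (n + 1) (k + 1)).eval x := by
    intro k
    have h := congrArg (eval x) (bernsteinPolynomial.succ_mul_succ_succ (R := ℝ) n k)
    simp only [eval_mul, eval_add, Polynomial.eval_natCast, eval_one, eval_X] at h
    field_simp
    linear_combination -h
  have hsum := congrArg (eval x) (bernsteinPolynomial.sum ℝ (n + 1))
  rw [eval_finsetSum, eval_one, Finset.sum_range_succ'] at hsum
  have h0 := bernsteinPolynomial.eval_nonneg (n + 1) 0 hx₀.le hx₁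
  have hle : x * (((n : ℝ) + 1) * (bernsteinSum n fun k => ((k : ℝ) + 1)⁻¹).eval x) ≤ 1 := by
    rw [eval_eq, Finset.mul_sum, Finset.mul_sum]
    simp only [hshift]
    linarith
  calc _ = x⁻¹ * (x * (((n : ℝ) + 1) * (bernsteinSum n fun k => ((k : ℝ) + 1)⁻¹).eval x)) := by
        field_simp
    _ ≤ x⁻¹ := mul_le_of_le_one_right (inv_nonneg.mpr hx₀.le) hle

end bernsteinSum

theorem Real.log_add_one_sub_log_le_inv {x : ℝ} (hx : 0 < x) : log (x + 1) - log x ≤ x⁻¹ := by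
  rw [← log_div (by positivity) hx.ne']
  calc log ((x + 1) / x) ≤ (x + 1) / x - 1 := log_le_sub_one_of_pos (by positivity)
    _ = x⁻¹ := by field_simp; ring

theorem Real.log_choose_succ_sub_log_choose {n k : ℕ} (hk : k < n) :
    log (n.choose (k + 1)) - log (n.choose k) = log ((n - k : ℕ) : ℝ) - log ((k : ℝ) + 1) := by
  have h := congrArg (fun m : ℕ => log (m : ℝ)) (Nat.choose_succ_right_eq n k)
  have hpos : ∀ j ≤ n, (n.choose j : ℝ) ≠ 0 := fun j hj => by positivity [Nat.choose_pos hj]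
  simp only [Nat.cast_mul] at h
  rw [log_mul (hpos _ hk) (by positivity),
    log_mul (hpos _ hk.le) (Nat.cast_ne_zero.mpr (by omega))] at h
  push_cast at h
  linarith

theorem Real.neg_le_log_choose_second_diff {N k : ℕ} (hk : k ≤ N) :
    -(((k : ℝ) + 1)⁻¹ + (((N - k : ℕ) : ℝ) + 1)⁻¹) ≤
      log ((N + 2).choose (k + 2)) - 2 * log ((N + 2).choose (k + 1)) +
        log ((N + 2).choose k) := by
  have h₁ := log_choose_succ_sub_log_choose (n := N + 2) (k := k + 1) (by omega)
  have h₀ := log_choose_succ_sub_log_choose (n := N + 2) (k := k) (by omega)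
  rw [show N + 2 - (k + 1) = (N - k) + 1 by omega] at h₁
  rw [show N + 2 - k = (N - k) + 1 + 1 by omega] at h₀
  push_cast at h₀ h₁
  have hj := log_add_one_sub_log_le_inv (x := ((N - k : ℕ) : ℝ) + 1) (by positivity)
  have hk := log_add_one_sub_log_le_inv (x := (k : ℝ) + 1) (by positivity)
  linarith

theorem Real.mul_log_mul_mul (a b c : ℝ) :
    a * b * c * log (a * b * c) = a * b * c * (log a + log b + log c) := by
  by_cases h : a * b * c = 0
  · simp [h]
  · obtain ⟨⟨ha, hb⟩, hc⟩ := mul_ne_zero_iff.mp h |>.imp_left mul_ne_zero_iff.mp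
    rw [log_mul (mul_ne_zero ha hb) hc, log_mul ha hb]

theorem le_eval_derivative_derivative_bernsteinSum_log_choose (n : ℕ) {x : ℝ} (hx₀ : 0 < x)
    (hx₁ : x < 1) :
    -(n * x⁻¹ + n * (1 - x)⁻¹) ≤
      (derivative (derivative (bernsteinSum n fun k => log (n.choose k)))).eval x := by
  have hx : 0 < 1 - x := by linarith
  match n with
  | 0 | 1 =>
    -- every `log C(n, k)` vanishes
    simp [bernsteinSum, Finset.sum_range_succ] <;> linarith [inv_pos.mpr hx₀, inv_pos.mpr hx]
  | N + 2 =>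
    have hA := bernsteinSum.mul_eval_inv_succ_le N hx₀ hx₁.le
    have hB := bernsteinSum.mul_eval_inv_succ_le N hx (by linarith)
    -- reflecting `k ↦ N - k` turns this bound at `1 - x` into one for the weights `1/(N-k+1)`
    rw [bernsteinSum.eval_one_sub] at hB
    have hΔ := bernsteinSum.eval_mono (n := N)
      (fun k hk => neg_le_log_choose_second_diff hk) hx₀.le hx₁.le
    rw [bernsteinSum.neg, bernsteinSum.add, eval_neg, eval_add] at hΔ
    rw [bernsteinSum.derivative_derivative, eval_smul, smul_eq_mul]
    push_cast
    have hN : (0 : ℝ) ≤ N + 1 := by positivity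
    linarith [mul_le_mul_of_nonneg_left hΔ (mul_nonneg (by positivity : (0 : ℝ) ≤ N + 2) hN),
      mul_le_mul_of_nonneg_left (add_le_add hA hB) (by positivity : (0 : ℝ) ≤ N + 2)]

theorem concaveOn_mul_binEntropy_sub_eval {a : ℝ} {P : ℝ[X]}
    (hP : ∀ x ∈ Ioo (0 : ℝ) 1,
      -(a * x⁻¹ + a * (1 - x)⁻¹) ≤ (derivative (derivative P)).eval x) :
    ConcaveOn ℝ (Ioo 0 1) (fun x => a * binEntropy x - P.eval x) := by
  refine concaveOn_of_hasDerivWithinAt2_nonpos (convex_Ioo 0 1)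
    (f' := fun x => a * (log (1 - x) - log x) - (derivative P).eval x)
    (f'' := fun x => a * (-(1 - x)⁻¹ - x⁻¹) - (derivative (derivative P)).eval x)
    (by fun_prop) (fun x hx => ?_) (fun x hx => ?_) (fun x hx => ?_) <;>
    rw [interior_Ioo] at hx <;> obtain ⟨hx₀, hx₁⟩ := hx
  · exact (((hasDerivAt_binEntropy hx₀.ne' hx₁.ne).const_mul a).sub
      (P.hasDerivAt x)).hasDerivWithinAt
  · have hlog : HasDerivAt (fun y => log (1 - y)) (-(1 - x)⁻¹) x := by
      convert ((hasDerivAt_id x).const_sub 1).log (sub_ne_zero.mpr hx₁.ne') using 1 <;>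
        simp [neg_div]
    exact (((hlog.sub (hasDerivAt_log hx₀.ne')).const_mul a).sub
      ((derivative P).hasDerivAt x)).hasDerivWithinAt
  · have := hP x ⟨hx₀, hx₁⟩
    linarith

theorem binomial_entropy_eq (n : ℕ) (x : ℝ) :
    -∑ m ∈ Finset.range (n + 1), (n.choose m * x ^ m * (1 - x) ^ (n - m)) *
        log (n.choose m * x ^ m * (1 - x) ^ (n - m)) =
      n * binEntropy x - (bernsteinSum n fun k => log (n.choose k)).eval x := by
  have hterm : ∀ m ∈ Finset.range (n + 1),
      (n.choose m * x ^ m * (1 - x) ^ (n - m)) * log (n.choose m * x ^ m * (1 - x) ^ (n - m)) =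
        log (n.choose m) * (bernsteinPolynomial ℝ n m).eval x +
          log x * (m * (bernsteinPolynomial ℝ n m).eval x) +
          log (1 - x) * (((n - m : ℕ) : ℝ) * (bernsteinPolynomial ℝ n m).eval x) := by
    intro m _
    rw [mul_log_mul_mul, log_pow, log_pow, bernsteinPolynomial.eval_eq]
    ring
  have hc := (bernsteinSum.eval_eq n (fun k => log (n.choose k)) x).symm
  have hm := bernsteinSum.eval_natCast n x
  have hm' := bernsteinSum.eval_natCast_sub n x
  rw [bernsteinSum.eval_eq] at hm hm'
  rw [Finset.sum_congr rfl hterm, Finset.sum_add_distrib, Finset.sum_add_distrib,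
    ← Finset.mul_sum, ← Finset.mul_sum, hc, hm, hm', binEntropy, log_inv, log_inv]
  ring

/-- Shepp–Olkin special case: the Shannon entropy of the binomial distribution
`S_n(T) = -∑_{m=0}^n C(n,m) T^m (1-T)^(n-m) log(C(n,m) T^m (1-T)^(n-m))`
is symmetric about `T = 1/2`, concave on `(0,1)`, hence maximized at `T = 1/2`. -/
theorem binomial_entropy_concave (n : ℕ)
    (S : ℝ → ℝ)
    (hS : ∀ T : ℝ, S T = -∑ m ∈ Finset.range (n + 1),
      ((Nat.choose n m : ℝ) * T ^ m * (1 - T) ^ (n - m)) *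
        Real.log ((Nat.choose n m : ℝ) * T ^ m * (1 - T) ^ (n - m))) :
    (∀ T ∈ Ioo (0:ℝ) 1, S T = S (1 - T)) ∧
      ConcaveOn ℝ (Ioo (0:ℝ) 1) S ∧
      (∀ T ∈ Ioo (0:ℝ) 1, S T ≤ S (1 / 2)) := by
  have hS' : S = fun x => n * binEntropy x - (bernsteinSum n fun k => log (n.choose k)).eval x :=
    funext fun x => (hS x).trans (binomial_entropy_eq n x)
  have hsymm : ∀ x, S x = S (1 - x) := by
    intro x
    simp only [hS']
    rw [binEntropy_one_sub, bernsteinSum.eval_one_sub,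
      bernsteinSum.congr (f := fun k => log (n.choose (n - k))) fun k hk => by
        rw [Nat.choose_symm hk]]
  have hconc : ConcaveOn ℝ (Ioo 0 1) S := hS' ▸ concaveOn_mul_binEntropy_sub_eval
    fun x hx => le_eval_derivative_derivative_bernsteinSum_log_choose n hx.1 hx.2
  refine ⟨fun x _ => hsymm x, hconc, fun x hx => ?_⟩
  have hx' : 1 - x ∈ Ioo (0 : ℝ) 1 := ⟨by linarith [hx.2], by linarith [hx.1]⟩
  have hmid := hconc.2 hx hx'
    (by norm_num : (0 : ℝ) ≤ 1 / 2) (by norm_num : (0 : ℝ) ≤ 1 / 2) (by norm_num)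
  simp only [smul_eq_mul] at hmid
  rw [← hsymm x, show 1 / 2 * x + 1 / 2 * (1 - x) = 1 / 2 by ring] at hmid
  linarith
end
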